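/- Let (M,g) be a compact Riemannian n-manifold with boundary Σ, written near Σ in Fermi coordinates as g = dt² + g_{ij}(t,x)dx^i dx^j where t is the distance to Σ. Suppose ρ is a smooth function vanishing on Σ that satisfies 2ρΔρ = n(|∇ρ|² − 1). Then on Σ one has ∂ρ/∂t = 1 and ∂²ρ/∂t² = −H/(n−1), where H is the mean curvature of Σ with respect to the inward normal convention H = −(∂/∂t) log√G |_Σ with G = det(g_{ij}). -/

import Mathlib

/-- Fermi coordinates `g = dt² + g_{ij}(t,x)dx^i dx^j` near the
boundary `Σ`. Here `ρ (t, x)` vanishes on `Σ = {t = 0}`, is positive inside,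
and satisfies `2ρΔρ = n(|∇ρ|² − 1)`, where
`Δρ = ∂²ρ/∂t² + (∂_t log√G) ∂_t ρ + (tangential Laplacian)` and
`|∇ρ|² = (∂_t ρ)² + (tangential gradient squared)`; `L = log√G` and
`H = −∂_t L|_{t=0}` is the mean curvature (inward normal convention). The
tangential terms `tlap`, `tgrad` vanish on `Σ` (along with `∂_t tgrad`) since
`ρ|_Σ = 0` and `∂_t ρ|_Σ` is constant. Conclusion: on `Σ`,
`∂ρ/∂t = 1` and `∂²ρ/∂t² = −H/(n−1)`. -/
theorem fermi_boundary_expansion {S : Type*} (n : ℕ) (hn : 3 ≤ n)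
    (ρ L tlap tgrad : ℝ → S → ℝ) (H : S → ℝ)
    (hρsm : ∀ x, ContDiff ℝ 3 (fun t => ρ t x))
    (hLsm : ∀ x, ContDiff ℝ 2 (fun t => L t x))
    (htlapdiff : ∀ x, Differentiable ℝ (fun t => tlap t x))
    (htgraddiff : ∀ x, Differentiable ℝ (fun t => tgrad t x))
    (hρ0 : ∀ x, ρ 0 x = 0)
    (hρpos : ∀ (x : S) (t : ℝ), 0 < t → 0 < ρ t x)
    (htlap0 : ∀ x, tlap 0 x = 0)
    (htgrad0 : ∀ x, tgrad 0 x = 0)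
    (htgrad0' : ∀ x, deriv (fun t => tgrad t x) 0 = 0)
    (hH : ∀ x, H x = -deriv (fun t => L t x) 0)
    (hpde : ∀ (t : ℝ) (x : S),
      2 * ρ t x * (deriv (deriv (fun s => ρ s x)) t
          + deriv (fun s => L s x) t * deriv (fun s => ρ s x) t + tlap t x)
        = (n : ℝ) * ((deriv (fun s => ρ s x) t) ^ 2 + tgrad t x - 1)) :
    ∀ x, deriv (fun t => ρ t x) 0 = 1 ∧
      deriv (deriv (fun t => ρ t x)) 0 = -H x / ((n : ℝ) - 1) := by
  intro x
  set f : ℝ → ℝ := fun t => ρ t x with hf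
  have hf3 : ContDiff ℝ 3 f := hρsm x
  have hf3' : ContDiff ℝ ((2 : ℕ) + 1) f := by exact_mod_cast hf3
  have hfd : Differentiable ℝ f := hf3.differentiable (by norm_num)
  have hg2 : ContDiff ℝ 2 (deriv f) := (contDiff_succ_iff_deriv.mp hf3').2.2
  have hgd : Differentiable ℝ (deriv f) := hg2.differentiable (by norm_num)
  have hg2' : ContDiff ℝ ((1 : ℕ) + 1) (deriv f) := by exact_mod_cast hg2
  have hg'd : Differentiable ℝ (deriv (deriv f)) :=
    ((contDiff_succ_iff_deriv.mp hg2').2.2).differentiable (by norm_num)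
  have hL2 : ContDiff ℝ ((1 : ℕ) + 1) (fun t => L t x) := by exact_mod_cast hLsm x
  have hLd : Differentiable ℝ (deriv (fun t => L t x)) :=
    ((contDiff_succ_iff_deriv.mp hL2).2.2).differentiable (by norm_num)
  -- Step 1: deriv f 0 = 1
  have hsq : (deriv f 0) ^ 2 = 1 := by
    have := hpde 0 x
    rw [hρ0 x, htgrad0 x] at this
    have hn' : (n : ℝ) ≠ 0 := by positivity
    have : (n : ℝ) * ((deriv f 0) ^ 2 + 0 - 1) = 0 := by
      rw [← this]; ring
    have h2 := mul_eq_zero.mp this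
    rcases h2 with h | h
    · exact absurd h hn'
    · linarith
  have hnonneg : 0 ≤ deriv f 0 := by
    have hd : HasDerivAt f (deriv f 0) 0 := (hfd 0).hasDerivAt
    have hslope := hasDerivAt_iff_tendsto_slope.mp hd
    have hslope' : Filter.Tendsto (slope f 0) (nhdsWithin 0 (Set.Ioi 0)) (nhds (deriv f 0)) :=
      hslope.mono_left (nhdsWithin_mono 0 (fun t ht => ne_of_gt ht))
    refine ge_of_tendsto hslope' ?_
    filter_upwards [self_mem_nhdsWithin] with t ht
    have : slope f 0 t = f t / t := by
      simp [slope, hρ0 x, hf, div_eq_inv_mul]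
    rw [this]
    exact div_nonneg (hρpos x t ht).le (le_of_lt ht)
  have hone : deriv f 0 = 1 := by nlinarith [hsq, hnonneg]
  refine ⟨hone, ?_⟩
  -- Step 2
  have hLHS : HasDerivAt (fun t => 2 * f t * (deriv (deriv f) t
      + deriv (fun s => L s x) t * deriv f t + tlap t x))
      (2 * deriv f 0 * (deriv (deriv f) 0 + deriv (fun s => L s x) 0 * deriv f 0 + tlap 0 x)
        + 2 * f 0 * (deriv (deriv (deriv f)) 0
          + (deriv (deriv (fun s => L s x)) 0 * deriv f 0
            + deriv (fun s => L s x) 0 * deriv (deriv f) 0)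
          + deriv (fun t => tlap t x) 0)) 0 := by
    exact (((hfd 0).hasDerivAt.const_mul 2).mul
      (((hg'd 0).hasDerivAt.add
        ((hLd 0).hasDerivAt.mul (hgd 0).hasDerivAt)).add (htlapdiff x 0).hasDerivAt))
  have hRHS : HasDerivAt (fun t => (n : ℝ) * ((deriv f t) ^ 2 + tgrad t x - 1))
      ((n : ℝ) * ((2 * deriv f 0 * deriv (deriv f) 0 + deriv (fun t => tgrad t x) 0) - 0)) 0 := by
    exact ((((hgd 0).hasDerivAt.pow 2).add (htgraddiff x 0).hasDerivAt).sub
      (hasDerivAt_const 0 1)).const_mul (n : ℝ) |>.congr_deriv (by ring)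
  have heq : (fun t => 2 * f t * (deriv (deriv f) t
      + deriv (fun s => L s x) t * deriv f t + tlap t x))
      = (fun t => (n : ℝ) * ((deriv f t) ^ 2 + tgrad t x - 1)) := by
    funext t; exact hpde t x
  rw [heq] at hLHS
  have key := hRHS.unique hLHS
  have hρ00 : f 0 = 0 := hρ0 x
  rw [hρ00, htlap0 x, htgrad0' x, hone] at key
  rw [hH x]
  have hn1 : (n : ℝ) - 1 ≠ 0 := by
    have : (3 : ℝ) ≤ n := by exact_mod_cast hn
    linarith
  field_simp
  nlinarith [key]
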